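/- Fix an integer n ≥ 1, and let G''ₙ be the group with generators a, b, c, d and relators ⁅a,c⁆, ⁅a,d⁆, ⁅b,c⁆, ⁅b,d⁆, ⁅a,b⁆·⁅c,d⁆, ⁅a,b⁆ⁿ and ⁅c,d⁆ⁿ. Then the assignments a ↦ (A,1), b ↦ (B,1), c ↦ (1,A), d ↦ (1,B) define a surjective group homomorphism φ from G''ₙ onto the finite group Qₙ = (H(ℤ/nℤ) × H(ℤ/nℤ))/Δ, where Δ = {(Z^k, Z^k) : k ∈ ℤ} is the diagonal copy of the common center, and the image φ(⁅a,b⁆) has order exactly n in Qₙ; in particular ⁅a,b⁆ has order exactly n in G''ₙ. -/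

import Mathlib

/-!
The relations hold in `Qₙ` because the two factors commute, `⁅A, B⁆ = Z`, so that
`⁅a, b⁆ ⁅c, d⁆ ↦ (Z, Z) ∈ Δ`, and `Zⁿ = 1` over `ℤ/nℤ`. Every element of `H(R)` is
`Aˣ Bʸ Zᶻ` and `Z = ⁅A, B⁆`, so `A` and `B` generate `H(R)` as soon as `ℤ → R` is onto;
this gives surjectivity. The diagonal `Δ` meets `H × 1` trivially, so `H` embeds in `Qₙ` as
the first factor and `φ ⁅a, b⁆ = [(Z, 1)]` has the order `n` of `Z`. Finally `⁅a, b⁆ⁿ = 1`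
in `G''ₙ` and orders can only drop under a homomorphism, so `⁅a, b⁆` has order `n` too.
-/

/-- The Heisenberg group over a commutative ring `R`: `3 × 3` upper triangular matrices
over `R` with all diagonal entries equal to `1`. -/
def Heisenberg (R : Type) [CommRing R] : Type :=
  {M : Matrix (Fin 3) (Fin 3) R //
    M 0 0 = 1 ∧ M 1 1 = 1 ∧ M 2 2 = 1 ∧ M 1 0 = 0 ∧ M 2 0 = 0 ∧ M 2 1 = 0}

namespace Heisenberg

variable {R : Type} [CommRing R]

instance : Mul (Heisenberg R) :=
  ⟨fun M N => ⟨M.1 * N.1, by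
    obtain ⟨m1, m2, m3, m4, m5, m6⟩ := M.2
    obtain ⟨n1, n2, n3, n4, n5, n6⟩ := N.2
    refine ⟨?_, ?_, ?_, ?_, ?_, ?_⟩ <;>
      simp [Matrix.mul_apply, Fin.sum_univ_three, m1, m2, m3, m4, m5, m6,
        n1, n2, n3, n4, n5, n6]⟩⟩

instance : One (Heisenberg R) := ⟨⟨1, by simp⟩⟩

instance : Inv (Heisenberg R) :=
  ⟨fun M => ⟨!![1, -M.1 0 1, M.1 0 1 * M.1 1 2 - M.1 0 2; 0, 1, -M.1 1 2; 0, 0, 1],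
    ⟨rfl, rfl, rfl, rfl, rfl, rfl⟩⟩⟩

theorem mul_val (M N : Heisenberg R) : (M * N).1 = M.1 * N.1 := rfl
theorem one_val : (1 : Heisenberg R).1 = 1 := rfl
theorem inv_val (M : Heisenberg R) :
    (M⁻¹).1 = !![1, -M.1 0 1, M.1 0 1 * M.1 1 2 - M.1 0 2; 0, 1, -M.1 1 2; 0, 0, 1] := rfl

instance : Group (Heisenberg R) where
  mul_assoc M N P := Subtype.ext (by rw [mul_val, mul_val, mul_val, mul_val, mul_assoc])
  one_mul M := Subtype.ext (by rw [mul_val, one_val, one_mul])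
  mul_one M := Subtype.ext (by rw [mul_val, one_val, mul_one])
  inv_mul_cancel M := by
    obtain ⟨m1, m2, m3, m4, m5, m6⟩ := M.2
    apply Subtype.ext
    rw [mul_val, inv_val, one_val]
    ext i j
    fin_cases i <;> fin_cases j <;>
      simp [Matrix.mul_apply, Fin.sum_univ_three, Matrix.one_apply,
        m1, m2, m3, m4, m5, m6] <;>
      ring

/-- The elementary unitriangular matrix with a `1` in position `(1,2)`. -/
def A : Heisenberg R := ⟨!![1, 1, 0; 0, 1, 0; 0, 0, 1], ⟨rfl, rfl, rfl, rfl, rfl, rfl⟩⟩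

/-- The elementary unitriangular matrix with a `1` in position `(2,3)`. -/
def B : Heisenberg R := ⟨!![1, 0, 0; 0, 1, 1; 0, 0, 1], ⟨rfl, rfl, rfl, rfl, rfl, rfl⟩⟩

/-- The generator of the center: the unitriangular matrix with a `1` in position `(1,3)`. -/
def Z : Heisenberg R := ⟨!![1, 0, 1; 0, 1, 0; 0, 0, 1], ⟨rfl, rfl, rfl, rfl, rfl, rfl⟩⟩

theorem Z_mem_center : (Z : Heisenberg R) ∈ Subgroup.center (Heisenberg R) := by
  rw [Subgroup.mem_center_iff]
  intro M
  obtain ⟨m1, m2, m3, m4, m5, m6⟩ := M.2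
  apply Subtype.ext
  rw [mul_val, mul_val]
  ext i j
  fin_cases i <;> fin_cases j <;>
    simp [Z, Matrix.mul_apply, Fin.sum_univ_three, Matrix.vecHead, Matrix.vecTail,
      m1, m2, m3, m4, m5, m6] <;> ring

end Heisenberg

open Heisenberg in
/-- The diagonal copy `Δ = {(Zᵏ, Zᵏ) : k ∈ ℤ}` of the common center in `H(R) × H(R)`. -/
def HeisDiag (R : Type) [CommRing R] : Subgroup (Heisenberg R × Heisenberg R) :=
  Subgroup.zpowers (Z, Z)

instance (R : Type) [CommRing R] : (HeisDiag R).Normal := by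
  have h1 : ∀ x : Heisenberg R × Heisenberg R, Commute x (Heisenberg.Z, Heisenberg.Z) := by
    intro x
    have hz := Subgroup.mem_center_iff.mp (Heisenberg.Z_mem_center (R := R))
    exact Prod.ext (hz x.1) (hz x.2)
  constructor
  intro m hm g
  obtain ⟨k, rfl⟩ := Subgroup.mem_zpowers_iff.mp hm
  rw [((h1 g).zpow_right k).eq, mul_assoc, mul_inv_cancel, mul_one]
  exact ⟨k, rfl⟩

open scoped commutatorElement

/-- Generators `a`, `b`, `c`, `d`. -/
def ga : FreeGroup (Fin 4) := FreeGroup.of 0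
def gb : FreeGroup (Fin 4) := FreeGroup.of 1
def gc : FreeGroup (Fin 4) := FreeGroup.of 2
def gd : FreeGroup (Fin 4) := FreeGroup.of 3

/-- Relators of
`G''ₙ = ⟨a,b,c,d | ⁅a,c⁆, ⁅a,d⁆, ⁅b,c⁆, ⁅b,d⁆, ⁅a,b⁆·⁅c,d⁆, ⁅a,b⁆ⁿ, ⁅c,d⁆ⁿ⟩`. -/
def G''nrels (n : ℕ) : Set (FreeGroup (Fin 4)) :=
  {⁅ga, gc⁆, ⁅ga, gd⁆, ⁅gb, gc⁆, ⁅gb, gd⁆, ⁅ga, gb⁆ * ⁅gc, gd⁆, ⁅ga, gb⁆ ^ n, ⁅gc, gd⁆ ^ n}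

namespace Heisenberg

variable {R : Type} [CommRing R]

def mk (x y z : R) : Heisenberg R :=
  ⟨!![1, x, z; 0, 1, y; 0, 0, 1], ⟨rfl, rfl, rfl, rfl, rfl, rfl⟩⟩

@[ext]
theorem ext {M N : Heisenberg R} (h₀₁ : M.1 0 1 = N.1 0 1) (h₁₂ : M.1 1 2 = N.1 1 2)
    (h₀₂ : M.1 0 2 = N.1 0 2) : M = N := by
  obtain ⟨m₀₀, m₁₁, m₂₂, m₁₀, m₂₀, m₂₁⟩ := M.2
  obtain ⟨n₀₀, n₁₁, n₂₂, n₁₀, n₂₀, n₂₁⟩ := N.2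
  apply Subtype.ext
  ext i j
  fin_cases i <;> fin_cases j <;> simp_all

theorem mk_entries (M : Heisenberg R) : mk (M.1 0 1) (M.1 1 2) (M.1 0 2) = M :=
  ext rfl rfl rfl

theorem mk_mul_mk (x y z x' y' z' : R) :
    mk x y z * mk x' y' z' = mk (x + x') (y + y') (z + z' + x * y') := by
  ext <;> rw [mul_val] <;> simp [mk, Matrix.mul_apply, Fin.sum_univ_three] <;> ring

theorem mk_inv (x y z : R) : (mk x y z)⁻¹ = mk (-x) (-y) (x * y - z) := rfl

theorem one_eq_mk : (1 : Heisenberg R) = mk 0 0 0 := by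
  ext <;> simp [mk, one_val]

theorem A_eq_mk : (A : Heisenberg R) = mk 1 0 0 := rfl
theorem B_eq_mk : (B : Heisenberg R) = mk 0 1 0 := rfl
theorem Z_eq_mk : (Z : Heisenberg R) = mk 0 0 1 := rfl

theorem mk_eq_mul (x y z : R) : mk x y z = mk x 0 0 * mk 0 y 0 * mk 0 0 (z - x * y) := by
  simp only [mk_mul_mk]
  congr 1 <;> ring

theorem commutatorElement_A_B :
    ⁅(A : Heisenberg R), (B : Heisenberg R)⁆ = (Z : Heisenberg R) := by
  simp only [commutatorElement_def, A_eq_mk, B_eq_mk, Z_eq_mk, mk_inv, mk_mul_mk]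
  congr 1 <;> ring

variable (R) in
def embedX : Multiplicative R →* Heisenberg R :=
  MonoidHom.mk' (fun t ↦ mk t.toAdd 0 0) fun _ _ ↦ by simp [mk_mul_mk]

variable (R) in
def embedY : Multiplicative R →* Heisenberg R :=
  MonoidHom.mk' (fun t ↦ mk 0 t.toAdd 0) fun _ _ ↦ by simp [mk_mul_mk]

variable (R) in
def embedZ : Multiplicative R →* Heisenberg R :=
  MonoidHom.mk' (fun t ↦ mk 0 0 t.toAdd) fun _ _ ↦ by simp [mk_mul_mk]

theorem embedZ_injective : Function.Injective (embedZ R) := fun _ _ h ↦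
  congrArg (fun M : Heisenberg R ↦ M.1 0 2) h

theorem A_zpow (k : ℤ) : (A : Heisenberg R) ^ k = mk (k : R) 0 0 := by
  simpa [embedX, A_eq_mk, ← ofAdd_zsmul] using
    (map_zpow (embedX R) (Multiplicative.ofAdd (1 : R)) k).symm

theorem B_zpow (k : ℤ) : (B : Heisenberg R) ^ k = mk 0 (k : R) 0 := by
  simpa [embedY, B_eq_mk, ← ofAdd_zsmul] using
    (map_zpow (embedY R) (Multiplicative.ofAdd (1 : R)) k).symm

theorem Z_zpow (k : ℤ) : (Z : Heisenberg R) ^ k = mk 0 0 (k : R) := by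
  simpa [embedZ, Z_eq_mk, ← ofAdd_zsmul] using
    (map_zpow (embedZ R) (Multiplicative.ofAdd (1 : R)) k).symm

theorem Z_pow_eq_one {n : ℕ} (hn : (n : R) = 0) : (Z : Heisenberg R) ^ n = 1 := by
  rw [← zpow_natCast, Z_zpow, Int.cast_natCast, hn, one_eq_mk]

theorem orderOf_Z : orderOf (Z : Heisenberg R) = addOrderOf (1 : R) := by
  rw [← orderOf_ofAdd_eq_addOrderOf, ← orderOf_injective _ (embedZ_injective (R := R))]
  rfl

theorem closure_A_B (hR : Function.Surjective (Int.cast : ℤ → R)) :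
    Subgroup.closure {(A : Heisenberg R), B} = ⊤ := by
  set S := Subgroup.closure {(A : Heisenberg R), B}
  have hA : A ∈ S := Subgroup.subset_closure (by simp)
  have hB : B ∈ S := Subgroup.subset_closure (by simp)
  have hZ : Z ∈ S := by
    rw [← commutatorElement_A_B, commutatorElement_def]
    exact mul_mem (mul_mem (mul_mem hA hB) (inv_mem hA)) (inv_mem hB)
  rw [eq_top_iff]
  rintro M -
  obtain ⟨i, hi⟩ := hR (M.1 0 1)
  obtain ⟨j, hj⟩ := hR (M.1 1 2)
  obtain ⟨k, hk⟩ := hR (M.1 0 2 - M.1 0 1 * M.1 1 2)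
  rw [← mk_entries M, mk_eq_mul, ← hk, ← hi, ← hj, ← A_zpow, ← B_zpow, ← Z_zpow]
  exact mul_mem (mul_mem (zpow_mem hA i) (zpow_mem hB j)) (zpow_mem hZ k)

end Heisenberg

theorem eq_one_of_mk_one_mem_zpowers_diag {G : Type*} [Group G] {z x : G}
    (h : (x, 1) ∈ Subgroup.zpowers (z, z)) : x = 1 := by
  obtain ⟨k, hk⟩ := Subgroup.mem_zpowers_iff.mp h
  have hx : z ^ k = x := congrArg Prod.fst hk
  have h1 : z ^ k = 1 := congrArg Prod.snd hk
  rw [← hx, h1]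

namespace HeisDiag

open Heisenberg

variable (R : Type) [CommRing R]

def quotInl : Heisenberg R →* (Heisenberg R × Heisenberg R) ⧸ HeisDiag R :=
  (QuotientGroup.mk' _).comp (MonoidHom.inl _ _)

def quotInr : Heisenberg R →* (Heisenberg R × Heisenberg R) ⧸ HeisDiag R :=
  (QuotientGroup.mk' _).comp (MonoidHom.inr _ _)

theorem quotInl_injective : Function.Injective (quotInl R) := by
  refine (injective_iff_map_eq_one _).mpr fun x hx ↦ ?_
  exact eq_one_of_mk_one_mem_zpowers_diag
    ((QuotientGroup.eq_one_iff (N := HeisDiag R) (x, 1)).mp hx)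

theorem commute_quotInl_quotInr (x y : Heisenberg R) : Commute (quotInl R x) (quotInr R y) :=
  (MonoidHom.commute_inl_inr x y).map (QuotientGroup.mk' (HeisDiag R))

theorem quotInl_Z_mul_quotInr_Z : quotInl R Z * quotInr R Z = 1 := by
  rw [quotInl, quotInr, MonoidHom.comp_apply, MonoidHom.comp_apply, ← map_mul,
    QuotientGroup.mk'_apply, QuotientGroup.eq_one_iff]
  show ((Z, 1) * (1, Z) : Heisenberg R × Heisenberg R) ∈ Subgroup.zpowers (Z, Z)
  rw [Prod.mk_mul_mk, mul_one, one_mul]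
  exact Subgroup.mem_zpowers _

def gens : Fin 4 → (Heisenberg R × Heisenberg R) ⧸ HeisDiag R :=
  ![quotInl R A, quotInl R B, quotInr R A, quotInr R B]

theorem closure_range_gens (hR : Function.Surjective (Int.cast : ℤ → R)) :
    Subgroup.closure (Set.range (gens R)) = ⊤ := by
  set S := Subgroup.closure (Set.range (gens R))
  have hmem : ∀ i, gens R i ∈ S := fun i ↦ Subgroup.subset_closure ⟨i, rfl⟩
  have hmap : ∀ f : Heisenberg R →* _, f A ∈ S → f B ∈ S → ∀ x, f x ∈ S := by
    intro f hA hB x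
    suffices Subgroup.closure {A, B} ≤ S.comap f from this (closure_A_B hR ▸ Subgroup.mem_top x)
    rw [Subgroup.closure_le]
    rintro _ (rfl | rfl)
    exacts [hA, hB]
  rw [eq_top_iff]
  rintro q -
  obtain ⟨⟨x, y⟩, rfl⟩ := QuotientGroup.mk_surjective q
  have hxy : (QuotientGroup.mk (x, y) : (Heisenberg R × Heisenberg R) ⧸ HeisDiag R) =
      quotInl R x * quotInr R y := by
    simp [quotInl, quotInr, ← QuotientGroup.mk_mul]
  exact hxy ▸ mul_mem (hmap _ (hmem 0) (hmem 1) x) (hmap _ (hmem 2) (hmem 3) y)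

theorem lift_gens_eq_one_of_mem_G''nrels {n : ℕ} (hn : (n : R) = 0) :
    ∀ r ∈ G''nrels n, FreeGroup.lift (gens R) r = 1 := by
  have hab : FreeGroup.lift (gens R) ⁅ga, gb⁆ = quotInl R Z := by
    simp [ga, gb, gens, map_commutatorElement, ← commutatorElement_A_B]
  have hcd : FreeGroup.lift (gens R) ⁅gc, gd⁆ = quotInr R Z := by
    simp [gc, gd, gens, map_commutatorElement, ← commutatorElement_A_B]
  intro r hr
  simp only [G''nrels, Set.mem_insert_iff, Set.mem_singleton_iff] at hr
  rcases hr with rfl | rfl | rfl | rfl | rfl | rfl | rfl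
  iterate 4
    simp [ga, gb, gc, gd, gens, map_commutatorElement, commutatorElement_eq_one_iff_commute,
      commute_quotInl_quotInr]
  · rw [map_mul, hab, hcd, quotInl_Z_mul_quotInr_Z]
  · rw [map_pow, hab, ← map_pow, Z_pow_eq_one hn, map_one]
  · rw [map_pow, hcd, ← map_pow, Z_pow_eq_one hn, map_one]

end HeisDiag

open Heisenberg in
theorem G''n_maps_onto_Qn_general (n : ℕ) :
    ∃ φ : PresentedGroup (G''nrels n) →*
        (Heisenberg (ZMod n) × Heisenberg (ZMod n)) ⧸ HeisDiag (ZMod n),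
      Function.Surjective φ ∧
      φ (PresentedGroup.of 0) = QuotientGroup.mk (A, 1) ∧
      φ (PresentedGroup.of 1) = QuotientGroup.mk (B, 1) ∧
      φ (PresentedGroup.of 2) = QuotientGroup.mk (1, A) ∧
      φ (PresentedGroup.of 3) = QuotientGroup.mk (1, B) ∧
      orderOf (φ ⁅(PresentedGroup.of 0 : PresentedGroup (G''nrels n)),
        (PresentedGroup.of 1 : PresentedGroup (G''nrels n))⁆) = n ∧
      orderOf ⁅(PresentedGroup.of 0 : PresentedGroup (G''nrels n)),
        (PresentedGroup.of 1 : PresentedGroup (G''nrels n))⁆ = n := by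
  set g := ⁅(PresentedGroup.of 0 : PresentedGroup (G''nrels n)),
    (PresentedGroup.of 1 : PresentedGroup (G''nrels n))⁆
  set φ := PresentedGroup.toGroup
    (HeisDiag.lift_gens_eq_one_of_mem_G''nrels (ZMod n) (ZMod.natCast_self n))
  have hφ (i : Fin 4) : φ (PresentedGroup.of i) = HeisDiag.gens (ZMod n) i :=
    PresentedGroup.toGroup.of _
  have hsurj : Function.Surjective φ := by
    rw [← MonoidHom.range_eq_top, eq_top_iff,
      ← HeisDiag.closure_range_gens _ ZMod.intCast_surjective, Subgroup.closure_le]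
    rintro _ ⟨i, rfl⟩
    exact ⟨_, hφ i⟩
  have hcomm : φ g = HeisDiag.quotInl (ZMod n) Z := by
    rw [map_commutatorElement, hφ, hφ, ← commutatorElement_A_B, map_commutatorElement]
    rfl
  have hord : orderOf (φ g) = n := by
    rw [hcomm, orderOf_injective _ (HeisDiag.quotInl_injective _), orderOf_Z,
      ZMod.addOrderOf_one]
  have hrel : g ^ n = 1 :=
    PresentedGroup.one_of_mem (x := ⁅ga, gb⁆ ^ n) (by simp [G''nrels])
  refine ⟨φ, hsurj, hφ 0, hφ 1, hφ 2, hφ 3, hord, ?_⟩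
  refine Nat.dvd_antisymm (orderOf_dvd_of_pow_eq_one hrel) ?_
  simpa only [hord] using orderOf_map_dvd φ g

open Heisenberg in
/-- For `n ≥ 1`, the assignments `a ↦ (A,1)`, `b ↦ (B,1)`, `c ↦ (1,A)`, `d ↦ (1,B)` define a
surjective homomorphism `φ` from `G''ₙ` onto `Qₙ = (H(ℤ/nℤ) × H(ℤ/nℤ))/Δ`, and the image
`φ(⁅a,b⁆)` has order exactly `n` in `Qₙ`; in particular `⁅a,b⁆` has order exactly `n`
in `G''ₙ`. -/
theorem G''n_maps_onto_Qn (n : ℕ) (hn : 1 ≤ n) :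
    ∃ φ : PresentedGroup (G''nrels n) →*
        (Heisenberg (ZMod n) × Heisenberg (ZMod n)) ⧸ HeisDiag (ZMod n),
      Function.Surjective φ ∧
      φ (PresentedGroup.of 0) = QuotientGroup.mk (A, 1) ∧
      φ (PresentedGroup.of 1) = QuotientGroup.mk (B, 1) ∧
      φ (PresentedGroup.of 2) = QuotientGroup.mk (1, A) ∧
      φ (PresentedGroup.of 3) = QuotientGroup.mk (1, B) ∧
      orderOf (φ ⁅(PresentedGroup.of 0 : PresentedGroup (G''nrels n)),
        (PresentedGroup.of 1 : PresentedGroup (G''nrels n))⁆) = n ∧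
      orderOf ⁅(PresentedGroup.of 0 : PresentedGroup (G''nrels n)),
        (PresentedGroup.of 1 : PresentedGroup (G''nrels n))⁆ = n :=
  G''n_maps_onto_Qn_general n
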